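/- arXiv:1410.6097 — 3 statements merged into one kernel-verified Lean document; each statement's English description precedes it below -/
import Mathlib

section
/- Let Q' = {q_1, ..., q_m} be a finite set with m ≥ 2 elements, viewed as generators of a free group. Define commutator words inductively: C_1 consists of words [q_i^{e_i}, q_j^{e_j}] = q_i^{e_i} q_j^{e_j} q_i^{-e_i} q_j^{-e_j} for i ≠ j and nonzero integers e_i, e_j; and C_i consists of words [q_i^{e_i}, v^e] where v ∈ C_{i-1} does not contain q_i as an occurrence and e_i, e are nonzero integers. Then every word w in C_{m-1} satisfies: for every q ∈ Q', the word obtained from w by deleting all occurrences of q and q^{-1} reduces to the identity in the free group on Q'. -/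
variable {Q : Type} [DecidableEq Q]

/-- The word `q^e` over the doubled alphabet `Q ∪ Q⁻¹`
(letters `(q, true)` positive, `(q, false)` formal inverses). -/
def wpow (q : Q) (e : ℤ) : List (Q × Bool) :=
  if 0 ≤ e then List.replicate e.toNat (q, true) else List.replicate (-e).toNat (q, false)

/-- Formal inverse of a word over `Q ∪ Q⁻¹`. -/
def winv (w : List (Q × Bool)) : List (Q × Bool) :=
  (w.map fun p => (p.1, !p.2)).reverse

/-- The word `w^e` for an integer exponent `e`. -/
def wIntPow (w : List (Q × Bool)) (e : ℤ) : List (Q × Bool) :=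
  if 0 ≤ e then (List.replicate e.toNat w).flatten
  else (List.replicate (-e).toNat (winv w)).flatten

/-- `q` occurs in `w` (as `q` or `q⁻¹`). -/
def occurs (q : Q) (w : List (Q × Bool)) : Prop := ∃ b : Bool, (q, b) ∈ w

/-- The inductively defined sets `C_k` of commutator words:
`C_1` consists of the words `[q_i^{e_i}, q_j^{e_j}]` for `i ≠ j` and nonzero
integer exponents, and `C_{k+1}` consists of the words `[q^{e'}, v^e]` where
`v ∈ C_k`, `q` does not occur in `v`, and `e', e` are nonzero. -/
inductive CommWord : ℕ → List (Q × Bool) → Prop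
  | base (i j : Q) (ei ej : ℤ) (hij : i ≠ j) (hei : ei ≠ 0) (hej : ej ≠ 0) :
      CommWord 1 (wpow i ei ++ wpow j ej ++ winv (wpow i ei) ++ winv (wpow j ej))
  | step (k : ℕ) (q : Q) (e' e : ℤ) (v : List (Q × Bool)) (hv : CommWord k v)
      (hq : ¬ occurs q v) (he' : e' ≠ 0) (he : e ≠ 0) :
      CommWord (k + 1) (wpow q e' ++ wIntPow v e ++ winv (wpow q e') ++ winv (wIntPow v e))

/-- The erasing morphism `ε_q`: delete all occurrences of `q` and `q⁻¹`. -/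
def eraseGen (q : Q) (w : List (Q × Bool)) : List (Q × Bool) :=
  w.filter fun p => decide (p.1 ≠ q)

/-!
Erasing `q` is the endomorphism of the free group that kills `q` and fixes the other generators,
so it sends a commutator `[a, b]` to `[ε_q a, ε_q b]`, which is trivial as soon as one entry is
killed. Hence, by induction on `k`, `ε_q` kills every word `[p^{e'}, v^e]` of `C_k` in which `q`
occurs: either `q = p`, or `q` occurs in `v`. A word of `C_k` involves exactly `k + 1`
generators, so a word of `C_{m-1}` involves all of them.
-/

open FreeGroup (mk of lift)
open scoped commutatorElement

omit [DecidableEq Q] in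
lemma mk_winv (w : List (Q × Bool)) : mk (winv w) = (mk w)⁻¹ :=
  (FreeGroup.inv_mk (L := w)).symm

omit [DecidableEq Q] in
lemma mk_wIntPow (v : List (Q × Bool)) (e : ℤ) : mk (wIntPow v e) = mk v ^ e := by
  unfold wIntPow
  split_ifs with he
  · rw [← FreeGroup.pow_mk, ← zpow_natCast, Int.toNat_of_nonneg he]
  · rw [← FreeGroup.pow_mk, mk_winv, inv_pow, ← zpow_natCast, Int.toNat_of_nonneg (by omega),
      zpow_neg, inv_inv]

omit [DecidableEq Q] in
lemma wpow_eq_wIntPow (q : Q) (e : ℤ) : wpow q e = wIntPow [(q, true)] e := by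
  unfold wpow wIntPow winv
  split_ifs <;> simp

omit [DecidableEq Q] in
lemma mk_wpow (q : Q) (e : ℤ) : mk (wpow q e) = of q ^ e := by
  rw [wpow_eq_wIntPow, mk_wIntPow]
  rfl

omit [DecidableEq Q] in
lemma mk_commutator (A B : List (Q × Bool)) :
    mk (A ++ B ++ winv A ++ winv B) = ⁅mk A, mk B⁆ := by
  simp only [← FreeGroup.mul_mk, mk_winv, commutatorElement_def]

def eraseHom (q : Q) : FreeGroup Q →* FreeGroup Q :=
  lift fun x => if x = q then 1 else of x

lemma eraseHom_of_self (q : Q) : eraseHom q (of q) = 1 := by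
  simp [eraseHom]

lemma mk_eraseGen (q : Q) (w : List (Q × Bool)) : mk (eraseGen q w) = eraseHom q (mk w) := by
  induction w with
  | nil => rfl
  | cons a t ih =>
    have h_letter : mk (eraseGen q [a]) = eraseHom q (mk [a]) := by
      obtain ⟨x, b⟩ := a
      by_cases hx : x = q <;> cases b <;> simp [eraseGen, eraseHom, FreeGroup.lift_mk, hx] <;> rfl
    rw [← List.singleton_append, eraseGen, List.filter_append, ← eraseGen, ← eraseGen,
      ← FreeGroup.mul_mk, ← FreeGroup.mul_mk, map_mul, h_letter, ih]

lemma eraseHom_mk_wpow_self (q : Q) (e : ℤ) : eraseHom q (mk (wpow q e)) = 1 := by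
  rw [mk_wpow, map_zpow, eraseHom_of_self, one_zpow]

def content (w : List (Q × Bool)) : Finset Q := (w.map Prod.fst).toFinset

lemma mem_content {q : Q} {w : List (Q × Bool)} : q ∈ content w ↔ occurs q w := by
  simp [content, occurs]

lemma content_append (a b : List (Q × Bool)) : content (a ++ b) = content a ∪ content b := by
  simp [content]

lemma content_winv (w : List (Q × Bool)) : content (winv w) = content w := by
  ext; simp [content, winv]

lemma content_wIntPow (v : List (Q × Bool)) {e : ℤ} (he : e ≠ 0) :
    content (wIntPow v e) = content v := by
  unfold wIntPow
  split_ifs <;> ext <;> simp [content, winv] <;> omega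

lemma content_wpow (q : Q) {e : ℤ} (he : e ≠ 0) : content (wpow q e) = {q} := by
  rw [wpow_eq_wIntPow, content_wIntPow _ he]
  rfl

lemma content_commutator (A B : List (Q × Bool)) :
    content (A ++ B ++ winv A ++ winv B) = content A ∪ content B := by
  simp only [content_append, content_winv]
  ext; simp; tauto

lemma CommWord.card_content {k : ℕ} {w : List (Q × Bool)} (hw : CommWord k w) :
    (content w).card = k + 1 := by
  induction hw with
  | base i j ei ej hij hei hej =>
    rw [content_commutator, content_wpow i hei, content_wpow j hej,
      Finset.card_union_of_disjoint (Finset.disjoint_singleton.mpr hij), Finset.card_singleton,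
      Finset.card_singleton]
  | step k p e' e v hv hq he' he ih =>
    rw [content_commutator, content_wpow p he', content_wIntPow v he,
      Finset.card_union_of_disjoint (Finset.disjoint_singleton_left.mpr (mem_content.not.mpr hq)),
      ih, Finset.card_singleton, add_comm]

lemma eraseHom_mk_commutator_eq_one {q : Q} {A B : List (Q × Bool)}
    (h : eraseHom q (mk A) = 1 ∨ eraseHom q (mk B) = 1) :
    eraseHom q (mk (A ++ B ++ winv A ++ winv B)) = 1 := by
  rw [mk_commutator, map_commutatorElement]
  rcases h with h | h
  · rw [h, commutatorElement_one_left]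
  · rw [h, commutatorElement_one_right]

lemma CommWord.eraseHom_mk_eq_one {k : ℕ} {w : List (Q × Bool)} (hw : CommWord k w) {q : Q}
    (hq : q ∈ content w) : eraseHom q (mk w) = 1 := by
  induction hw with
  | base i j ei ej _ hei hej =>
    simp only [content_commutator, content_wpow i hei, content_wpow j hej, Finset.mem_union,
      Finset.mem_singleton] at hq
    rcases hq with rfl | rfl
    · exact eraseHom_mk_commutator_eq_one (.inl (eraseHom_mk_wpow_self q ei))
    · exact eraseHom_mk_commutator_eq_one (.inr (eraseHom_mk_wpow_self q ej))
  | step k p e' e v _ _ he' he ih =>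
    simp only [content_commutator, content_wpow p he', content_wIntPow v he, Finset.mem_union,
      Finset.mem_singleton] at hq
    rcases hq with rfl | hv
    · exact eraseHom_mk_commutator_eq_one (.inl (eraseHom_mk_wpow_self q e'))
    · refine eraseHom_mk_commutator_eq_one (.inr ?_)
      rw [mk_wIntPow, map_zpow, ih hv, one_zpow]

theorem commWord_strongly_fragile_general [Fintype Q]
    (w : List (Q × Bool)) (hw : CommWord (Fintype.card Q - 1) w) (q : Q) :
    FreeGroup.mk (eraseGen q w) = 1 := by
  have hcard : (content w).card = Fintype.card Q := by
    have := Fintype.card_pos_iff.mpr ⟨q⟩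
    rw [hw.card_content]
    omega
  rw [mk_eraseGen]
  exact hw.eraseHom_mk_eq_one (by simp [Finset.eq_univ_of_card _ hcard])

/-- Every commutator word in `C_{m-1}` on a set of `m ≥ 2` generators is strongly
fragile: erasing any generator yields a word that reduces to the identity of the
free group. -/
theorem commWord_strongly_fragile [Fintype Q] (hm : 2 ≤ Fintype.card Q)
    (w : List (Q × Bool)) (hw : CommWord (Fintype.card Q - 1) w) (q : Q) :
    FreeGroup.mk (eraseGen q w) = 1 :=
  commWord_strongly_fragile_general w hw q
end

section
/- An element u of (Q ∪ Q^{-1})^ω is essentially trivial if and only if there is an integer m such that for every finite factor w of u, the reduced form of w has length at most m. -/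
variable {Q : Type} [DecidableEq Q] [Fintype Q]

/-- The length-`n` prefix of a right-infinite word. -/
def pre (u : ℕ → Q × Bool) (n : ℕ) : List (Q × Bool) := List.ofFn fun i : Fin n => u i

/-- The factor `u[i..i+l-1]` of the infinite word `u`. -/
def factor (u : ℕ → Q × Bool) (i l : ℕ) : List (Q × Bool) :=
  List.ofFn fun k : Fin l => u (i + k)

/-- The free reduction of a word over `Q ∪ Q⁻¹`. -/
def red (w : List (Q × Bool)) : List (Q × Bool) := FreeGroup.reduce w

/-- `u` is essentially trivial: the reduced forms of its prefixes have uniformly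
bounded length. -/
def EssentiallyTrivial (u : ℕ → Q × Bool) : Prop :=
  ∃ m : ℕ, ∀ n, (red (pre u n)).length ≤ m

/-! The factor `u[i..i+l)` represents the same element of the free group as
`(u[0..i))⁻¹ · u[0..i+l)`, so its reduction is at most as long as the two prefix
reductions together; conversely every prefix is a factor. -/

section

variable {α : Type}

theorem pre_add (u : ℕ → α × Bool) (i l : ℕ) : pre u (i + l) = pre u i ++ factor u i l := by
  simp [pre, factor, List.ofFn_add]

theorem factor_zero (u : ℕ → α × Bool) (n : ℕ) : factor u 0 n = pre u n := by
  simp [pre, factor]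

theorem FreeGroup.mk_factor (u : ℕ → α × Bool) (i l : ℕ) :
    FreeGroup.mk (factor u i l) = (FreeGroup.mk (pre u i))⁻¹ * FreeGroup.mk (pre u (i + l)) := by
  rw [pre_add, ← FreeGroup.mul_mk, inv_mul_cancel_left]

variable [DecidableEq α]

theorem length_red (w : List (α × Bool)) : (red w).length = (FreeGroup.mk w).norm := by
  rw [FreeGroup.norm, FreeGroup.toWord_mk, red]

theorem length_red_factor_le (u : ℕ → α × Bool) (i l : ℕ) :
    (red (factor u i l)).length ≤ (red (pre u i)).length + (red (pre u (i + l))).length := by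
  simp only [length_red, FreeGroup.mk_factor]
  exact (FreeGroup.norm_mul_le _ _).trans_eq (by rw [FreeGroup.norm_inv_eq])

end

/-- An infinite word `u` over `Q ∪ Q⁻¹` is essentially trivial if and only if there
is an integer `m` such that the reduced form of every finite factor of `u` has
length at most `m`. -/
theorem essentiallyTrivial_iff_bounded_factor_reductions (u : ℕ → Q × Bool) :
    EssentiallyTrivial u ↔ ∃ m : ℕ, ∀ i l : ℕ, (red (factor u i l)).length ≤ m := by
  constructor
  · rintro ⟨m, hm⟩
    exact ⟨2 * m, fun i l => (length_red_factor_le u i l).trans (by linarith [hm i, hm (i + l)])⟩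
  · rintro ⟨m, hm⟩
    exact ⟨m, fun n => factor_zero u n ▸ hm 0 n⟩
end

section
/- An element u of (Q ∪ Q^{-1})^ω is essentially trivial if and only if u is the label of a right-infinite path, starting from the root, in some finite rooted inverse tree over Q. -/
variable {Q : Type} [DecidableEq Q] [Fintype Q]

/-- A finite rooted inverse tree over `Q`: a finite deterministic involutive
`(Q ∪ Q⁻¹)`-labelled graph with a base point, without loops or parallel edges,
whose underlying undirected graph (one edge from each inverse pair, orientation
forgotten) is a tree. -/
structure RootedInverseTree (Q : Type) [DecidableEq Q] where
  V : Type
  fin : Fintype V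
  root : V
  edge : V → Q × Bool → Option V
  invol : ∀ v a w, edge v a = some w → edge w (a.1, !a.2) = some v
  noLoop : ∀ v a, edge v a ≠ some v
  noMulti : ∀ v a b w, edge v a = some w → edge v b = some w → a = b
  tree : (SimpleGraph.fromRel fun v w => ∃ a, edge v a = some w).IsTree


/-!
If the reduced forms of the prefixes of `u` have length at most `m`, then `u` labels the path
through these reduced forms in the ball of radius `m` of the Cayley graph of the free group on
`Q`; this ball is a finite inverse tree, since every nontrivial reduced word has a unique parent,
obtained by deleting its last letter.

Conversely, reading a word in an inverse graph ends at the same vertex as reading its reduced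
form, and in a tree a reduced word traces a path, because two consecutive letters are never
inverse to each other and the labelling is deterministic. So the reduced forms of the prefixes are
shorter than the number of vertices.
-/

namespace SimpleGraph

theorem isTree_of_height {V : Type*} {G : SimpleGraph V} (r : V) (h : V → ℕ)
    (exists_adj_lt : ∀ v ≠ r, ∃ w, G.Adj v w ∧ h w < h v)
    (eq_of_adj_of_le : ∀ v w w', G.Adj v w → G.Adj v w' → h w ≤ h v → h w' ≤ h v → w = w') :
    G.IsTree := by
  classical
  have reachable : ∀ v, G.Reachable r v := by
    intro v
    induction hv : h v using Nat.strong_induction_on generalizing v with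
    | _ n ih =>
      by_cases hvr : v = r
      · rw [hvr]
      · obtain ⟨w, hadj, hlt⟩ := exists_adj_lt v hvr
        exact (ih (h w) (hv ▸ hlt) w rfl).trans hadj.symm.reachable
  have : Nonempty V := ⟨r⟩
  refine ⟨Connected.mk fun v w => (reachable v).symm.trans (reachable w), ?_⟩
  intro v c hc
  -- The two neighbours of a highest vertex on a cycle are distinct, but both are lower.
  obtain ⟨u, hu, hmax⟩ := c.support.toFinset.exists_max_image h ⟨v, by simp⟩
  rw [List.mem_toFinset] at hu
  have hc' := hc.rotate hu
  have hle : ∀ w ∈ (c.rotate u hu).support, h w ≤ h u := fun w hw =>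
    hmax w (by simpa using hw)
  have hnil := hc'.not_nil
  exact hc'.snd_ne_penultimate <| eq_of_adj_of_le u _ _ (Walk.adj_snd hnil)
    (Walk.adj_penultimate hnil).symm (hle _ (Walk.getVert_mem_support _ _))
    (hle _ (Walk.getVert_mem_support _ _))

end SimpleGraph

namespace FreeGroup

theorem inv_mk_singleton {α : Type} (a : α × Bool) : (mk [a])⁻¹ = mk [(a.1, !a.2)] := by
  simp [inv_mk, invRev]

variable {α : Type} [DecidableEq α]

theorem toWord_mk_singleton (a : α × Bool) : (mk [a]).toWord = [a] := by
  rw [toWord_mk, reduce_singleton]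

theorem toWord_mul_mk_singleton (x : FreeGroup α) (a : α × Bool) :
    (x * mk [a]).toWord = x.toWord ++ [a] ∨
      x.toWord = (x * mk [a]).toWord ++ [(a.1, !a.2)] := by
  rw [toWord_mul, toWord_mk_singleton]
  rcases List.eq_nil_or_concat' x.toWord with hx | ⟨L, b, hx⟩
  · simp [hx]
  have hL : IsReduced L := isReduced_toWord.infix ⟨[], [b], by rw [hx]; simp⟩
  by_cases hb : b = (a.1, !a.2)
  · right
    have hcancel : Red.Step (L ++ [b] ++ [a]) L := by
      simpa [hb] using Red.Step.not (L₁ := L) (L₂ := []) (x := a.1) (b := !a.2)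
    rw [hx, reduce.Step.eq hcancel, hL.reduce_eq, hb]
  · left
    refine IsReduced.reduce_eq ?_
    rw [hx, List.append_assoc, List.singleton_append]
    refine List.isChain_append_cons_cons.mpr ⟨hx ▸ isReduced_toWord, fun h1 => ?_, .singleton a⟩
    by_contra h2
    exact hb (Prod.ext h1 (Bool.eq_not.mpr h2))

theorem toWord_eq_append_of_norm_mul_le {x : FreeGroup α} {a : α × Bool}
    (h : (x * mk [a]).norm ≤ x.norm) :
    x.toWord = (x * mk [a]).toWord ++ [(a.1, !a.2)] := by
  refine (toWord_mul_mk_singleton x a).resolve_left fun h' => ?_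
  have := congrArg List.length h'
  simp only [norm, List.length_append, List.length_singleton] at h this
  omega

theorem exists_mul_mk_singleton_eq_of_ne_one {x : FreeGroup α} (hx : x ≠ 1) :
    ∃ y a, y.norm < x.norm ∧ y * mk [a] = x := by
  obtain ⟨L, a, hL⟩ := (List.eq_nil_or_concat' x.toWord).resolve_left (mt toWord_eq_nil_iff.mp hx)
  have hLred : reduce L = L := (isReduced_toWord.infix ⟨[], [a], by rw [hL]; simp⟩).reduce_eq
  refine ⟨mk L, a, ?_, by rw [mul_mk, ← hL, mk_toWord]⟩
  simp [norm, toWord_mk, hLred, hL]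

end FreeGroup

namespace InverseGraph

variable {V α : Type} (edge : V → α × Bool → Option V)

def underlying : SimpleGraph V := SimpleGraph.fromRel fun v w => ∃ a, edge v a = some w

variable {edge}

theorem foldlM_eq_some_of_red (invol : ∀ v a w, edge v a = some w → edge w (a.1, !a.2) = some v)
    {L₁ L₂ : List (α × Bool)} (h : FreeGroup.Red L₁ L₂) {v x : V}
    (hx : L₁.foldlM edge v = some x) : L₂.foldlM edge v = some x := by
  induction h with
  | refl => exact hx
  | tail _ hstep ih =>
    obtain @⟨L, L', y, b⟩ := hstep
    simp only [List.foldlM_append, List.foldlM_cons, Option.bind_eq_bind,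
      Option.bind_eq_some_iff] at ih ⊢
    obtain ⟨p, hp, q, hq, r, hr, hx⟩ := ih
    rw [invol p (y, b) q hq, Option.some_inj] at hr
    exact ⟨p, hp, hr ▸ hx⟩

theorem exists_isPath_of_foldlM_eq_some
    (invol : ∀ v a w, edge v a = some w → edge w (a.1, !a.2) = some v)
    (noLoop : ∀ v a, edge v a ≠ some v)
    (noMulti : ∀ v a b w, edge v a = some w → edge v b = some w → a = b)
    (acyclic : (underlying edge).IsAcyclic) {L : List (α × Bool)} (hL : FreeGroup.IsReduced L)
    {v x : V} (hx : L.foldlM edge v = some x) :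
    ∃ p : (underlying edge).Walk v x, p.IsPath ∧ p.length = L.length := by
  suffices ∃ p : (underlying edge).Walk v x, p.edges.IsChain (· ≠ ·) ∧
      p.length = L.length ∧ ∀ a ∈ L.head?, edge v a = some p.snd by
    obtain ⟨p, hp, hlen, -⟩ := this
    exact ⟨p, (acyclic.isPath_iff_isChain p).mpr hp, hlen⟩
  induction L generalizing v with
  | nil =>
    obtain rfl : v = x := by simpa using hx
    exact ⟨.nil, by simp, rfl, by simp⟩
  | cons a L ih =>
    simp only [List.foldlM_cons, Option.bind_eq_bind, Option.bind_eq_some_iff] at hx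
    obtain ⟨w, hvw, hx⟩ := hx
    obtain ⟨q, hq, hlen, hhead⟩ := ih hL.tail hx
    have hadj : (underlying edge).Adj v w := ⟨fun h => noLoop v a (h ▸ hvw), Or.inl ⟨a, hvw⟩⟩
    refine ⟨.cons hadj q, ?_, by simp [hlen], by simpa using hvw⟩
    rw [SimpleGraph.Walk.edges_cons, List.isChain_cons]
    refine ⟨?_, hq⟩
    cases q with
    | nil => simp
    | cons _ _ =>
      simp only [SimpleGraph.Walk.edges_cons, List.head?_cons, Option.mem_def, Option.some_inj,
        forall_eq', ne_eq, Sym2.eq_iff]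
      rintro (⟨rfl, -⟩ | ⟨rfl, -⟩)
      · exact hadj.ne rfl
      -- Going back from `w` to `v` would need the letter inverse to `a` to follow `a`.
      cases L with
      | nil => simp at hlen
      | cons b L =>
        have hb : b = (a.1, !a.2) := noMulti w b _ v (by simpa using hhead) (invol v a w hvw)
        have := (FreeGroup.isReduced_cons_cons.mp hL).1
        simp [hb] at this

end InverseGraph

namespace FreeGroup

variable {α : Type} [DecidableEq α]

variable (α) in
abbrev ClosedBall (m : ℕ) : Type := {x : FreeGroup α // x.norm ≤ m}

namespace ClosedBall

variable {m : ℕ}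

instance [Finite α] : Finite (ClosedBall α m) :=
  have : Finite {L : List (α × Bool) // L.length ≤ m} := List.finite_length_le (α × Bool) m
  Finite.of_injective (fun x : ClosedBall α m => (⟨x.1.toWord, x.2⟩ : {L // L.length ≤ m}))
    fun _ _ h => Subtype.ext (toWord_injective (congrArg Subtype.val h))

def root : ClosedBall α m := ⟨1, by simp⟩

def edge (x : ClosedBall α m) (a : α × Bool) : Option (ClosedBall α m) :=
  if h : (x.1 * mk [a]).norm ≤ m then some ⟨x.1 * mk [a], h⟩ else none

theorem edge_eq_some_iff {x y : ClosedBall α m} {a : α × Bool} :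
    edge x a = some y ↔ y.1 = x.1 * mk [a] := by
  unfold edge
  split_ifs with h
  · simp [Subtype.ext_iff, eq_comm]
  · simp only [false_iff]
    exact fun hy => h (hy ▸ y.2)

theorem edge_invol (x : ClosedBall α m) (a : α × Bool) (y : ClosedBall α m)
    (h : edge x a = some y) : edge y (a.1, !a.2) = some x := by
  rw [edge_eq_some_iff] at h ⊢
  rw [h, ← inv_mk_singleton, mul_inv_cancel_right]

theorem edge_ne_self (x : ClosedBall α m) (a : α × Bool) : edge x a ≠ some x := by
  rw [Ne, edge_eq_some_iff, left_eq_mul, ← toWord_inj, toWord_mk_singleton, toWord_one]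
  exact List.cons_ne_nil a []

theorem eq_of_edge_eq_some (x : ClosedBall α m) (a b : α × Bool) (y : ClosedBall α m)
    (ha : edge x a = some y) (hb : edge x b = some y) : a = b := by
  rw [edge_eq_some_iff] at ha hb
  have := congrArg toWord (mul_left_cancel (ha.symm.trans hb))
  simpa only [toWord_mk_singleton, List.singleton_inj] using this

theorem exists_eq_mul_of_adj {x y : ClosedBall α m} (h : (InverseGraph.underlying edge).Adj x y) :
    ∃ a, y.1 = x.1 * mk [a] := by
  obtain ⟨-, ⟨a, ha⟩ | ⟨a, ha⟩⟩ := h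
  · exact ⟨a, edge_eq_some_iff.mp ha⟩
  · refine ⟨(a.1, !a.2), ?_⟩
    rw [← inv_mk_singleton]
    exact eq_mul_inv_of_mul_eq (edge_eq_some_iff.mp ha).symm

theorem isTree_underlying : (InverseGraph.underlying (edge (α := α) (m := m))).IsTree := by
  refine SimpleGraph.isTree_of_height root (fun x => x.1.norm) (fun x hx => ?_) ?_
  · obtain ⟨y, a, hlt, hyx⟩ := exists_mul_mk_singleton_eq_of_ne_one fun h => hx (Subtype.ext h)
    let p : ClosedBall α m := ⟨y, hlt.le.trans x.2⟩
    have hpx : edge p a = some x := edge_eq_some_iff.mpr hyx.symm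
    exact ⟨p, ⟨fun h => hlt.ne (h ▸ rfl), Or.inr ⟨a, hpx⟩⟩, hlt⟩
  · have parent : ∀ x y : ClosedBall α m, (InverseGraph.underlying edge).Adj x y →
        y.1.norm ≤ x.1.norm → y.1.toWord = x.1.toWord.dropLast := by
      intro x y hxy hle
      obtain ⟨a, ha⟩ := exists_eq_mul_of_adj hxy
      rw [ha] at hle ⊢
      rw [toWord_eq_append_of_norm_mul_le hle, List.dropLast_concat]
    intro x y y' hy hy' hle hle'
    exact Subtype.ext (toWord_injective ((parent x y hy hle).trans (parent x y' hy' hle').symm))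

end ClosedBall

noncomputable def ballTree [Fintype α] (m : ℕ) : RootedInverseTree α where
  V := ClosedBall α m
  fin := Fintype.ofFinite _
  root := ClosedBall.root
  edge := ClosedBall.edge
  invol := ClosedBall.edge_invol
  noLoop := ClosedBall.edge_ne_self
  noMulti := ClosedBall.eq_of_edge_eq_some
  tree := ClosedBall.isTree_underlying

end FreeGroup

theorem RootedInverseTree.length_reduce_lt_card {α : Type} [DecidableEq α]
    (T : RootedInverseTree α) {L : List (α × Bool)} {v x : T.V}
    (h : L.foldlM T.edge v = some x) : (FreeGroup.reduce L).length < Nat.card T.V := by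
  have := T.fin
  obtain ⟨p, hp, hlen⟩ := InverseGraph.exists_isPath_of_foldlM_eq_some T.invol T.noLoop
    T.noMulti T.tree.isAcyclic (FreeGroup.isReduced_iff_reduce_eq.mpr FreeGroup.reduce.idem)
    (InverseGraph.foldlM_eq_some_of_red T.invol FreeGroup.reduce.red h)
  rw [← hlen, Nat.card_eq_fintype_card]
  exact hp.length_lt

theorem pre_succ {α : Type} (u : ℕ → α × Bool) (n : ℕ) : pre u (n + 1) = pre u n ++ [u n] := by
  rw [pre, pre, List.ofFn_succ']
  simp

/-- An infinite word `u` over `Q ∪ Q⁻¹` is essentially trivial if and only if `u`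
is the label of a right-infinite path starting from the root in some finite rooted
inverse tree over `Q`. -/
theorem essentiallyTrivial_iff_path_in_finite_inverse_tree (u : ℕ → Q × Bool) :
    EssentiallyTrivial u ↔
      ∃ (T : RootedInverseTree Q) (f : ℕ → T.V),
        f 0 = T.root ∧ ∀ n, T.edge (f n) (u n) = some (f (n + 1)) := by
  constructor
  · rintro ⟨m, hm⟩
    have hnorm n : (FreeGroup.mk (pre u n)).norm ≤ m := by
      rw [FreeGroup.norm, FreeGroup.toWord_mk]
      exact hm n
    refine ⟨FreeGroup.ballTree m, fun n => ⟨_, hnorm n⟩, rfl, fun n => ?_⟩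
    exact FreeGroup.ClosedBall.edge_eq_some_iff.mpr (by simp only [pre_succ, FreeGroup.mul_mk])
  · rintro ⟨T, f, h0, hf⟩
    have hread : ∀ n, (pre u n).foldlM T.edge T.root = some (f n) := by
      intro n
      induction n with
      | zero => simp [pre, h0]
      | succ n ih => simp [pre_succ, List.foldlM_append, ih, hf n]
    exact ⟨Nat.card T.V, fun n => (T.length_reduce_lt_card (hread n)).le⟩
end
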